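/- If a finite metric space (X,d) admits a (τ,ρ,k,δ)-ultrametric cover, where ρ ≥ 1, k ≥ 1, δ ≥ 1, then it admits a (τ·⌈δ/2⌉, ρ/k)-LSO. -/

import Mathlib

open scoped BigOperators

open scoped BigOperators

/-- `du` is an ultrametric distance function on `X`: a metric satisfying the
strong triangle inequality. -/
def UltrametricOn {X : Type*} (du : X → X → ℝ) : Prop :=
  (∀ x, du x x = 0) ∧ (∀ x y : X, x ≠ y → 0 < du x y) ∧
    (∀ x y : X, du x y = du y x) ∧
    ∀ x y z : X, du x z ≤ max (du x y) (du y z)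

/-- The ultrametric `du` is a `k`-HST: distinct positive distance values are
separated by a factor of `k`. -/
def IsHST {X : Type*} (du : X → X → ℝ) (k : ℝ) : Prop :=
  ∀ x y z : X, 0 < du x y → du x y < du x z → k * du x y ≤ du x z

/-- The tree of the ultrametric `du` has degree at most `δ`: for every `x` and
`r > 0`, the closed ball `{y : du x y ≤ r}` meets at most `δ` equivalence
classes of the relation `du (·,·) < r`. -/
def HSTDegreeLE {X : Type*} (du : X → X → ℝ) (δ : ℝ) : Prop :=
  ∀ (x : X) (r : ℝ), 0 < r → ∃ S : Finset X, (S.card : ℝ) ≤ δ ∧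
    ∀ y : X, du x y ≤ r → ∃ z ∈ S, du y z < r

/-- `(τ, ρ, k, δ)`-ultrametric cover: a `(τ,ρ)`-ultrametric cover in which every
ultrametric is a `k`-HST whose tree has degree at most `δ`. -/
def IsHSTUltrametricCover (X : Type*) [MetricSpace X] (τ ρ k δ : ℝ) : Prop :=
  ∃ s : ℕ, (s : ℝ) ≤ τ ∧ ∃ D : Fin s → X → X → ℝ,
    (∀ i, UltrametricOn (D i)) ∧
    (∀ (i : Fin s) (x y : X), dist x y ≤ D i x y) ∧
    (∀ x y : X, ∃ i, D i x y ≤ ρ * dist x y) ∧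
    (∀ i, IsHST (D i) k) ∧
    ∀ i, HSTDegreeLE (D i) δ

/-- `X` has doubling dimension at most `d`: every ball of radius `2r` can be
covered by at most `2^d` balls of radius `r`. -/
def DoublingDimLE (X : Type*) [MetricSpace X] (d : ℝ) : Prop :=
  ∀ (x : X) (r : ℝ), 0 < r → ∃ S : Finset X, (S.card : ℝ) ≤ (2 : ℝ) ^ d ∧
    ∀ y : X, dist x y ≤ 2 * r → ∃ z ∈ S, dist y z ≤ r

/-- The ordering `σ` serves the pair `(x,y)` with stretch `ρ` (w.r.t. the
distance function `d`): `x ≺_σ y` and the points strictly between `x` and `y`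
in `σ` split (at threshold `t`) into a prefix interval contained in
`B(x, ρ·d(x,y))` and a suffix interval contained in `B(y, ρ·d(x,y))`. -/
def LSOPair {X : Type*} (d : X → X → ℝ) (σ : X → ℝ) (ρ : ℝ) (x y : X) : Prop :=
  σ x < σ y ∧ ∃ t : ℝ, ∀ z : X, σ x < σ z → σ z < σ y →
    (σ z < t → d x z ≤ ρ * d x y) ∧ (t ≤ σ z → d y z ≤ ρ * d x y)

/-- `(τ,ρ)`-LSO for `X` with distance function `d`: at most `τ` linear
orderings of `X` (each given by an injective real-valued function), such that
every pair is served by some ordering, possibly after swapping roles. -/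
def IsLSO {X : Type*} (d : X → X → ℝ) (τ ρ : ℝ) : Prop :=
  ∃ s : ℕ, (s : ℝ) ≤ τ ∧ ∃ σ : Fin s → X → ℝ,
    (∀ i, Function.Injective (σ i)) ∧
    ∀ x y : X, x ≠ y → ∃ i, LSOPair d (σ i) ρ x y ∨ LSOPair d (σ i) ρ y x

/-!
Fix one `k`-HST `d_U` of the cover; its degree is at most `δ ≤ 2m` with `m = ⌈δ/2⌉`. It yields
`m` orderings, built recursively: split the current point set into the classes of the relation
`d_U < R`, `R` its `d_U`-diameter. There are at most `2m` classes, and the `m` zigzag paths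
`j, j+1, j-1, j+2, j-2, …` of `ℤ/2m` (which together cover every edge of the complete graph) make
any two classes consecutive in one of the orderings. Each class is ordered recursively and placed
as a contiguous block. For `x ≠ y` some ordering then puts every point strictly between `x` and
`y` into the class of `x` or of `y` at level `d_U(x,y)`, that is, `d_U`-closer than `d_U(x,y)` to
`x` or to `y`. The HST property improves "closer" to "closer by a factor `k`", and
`d ≤ d_U ≤ ρ d` on the ultrametric covering the pair gives the stretch `ρ/k`.
-/

lemma Finset.exists_injOn_lt_of_card_le {α : Type*} {s : Finset α} {n : ℕ} (hs : s.card ≤ n)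
    (hn : 0 < n) : ∃ e : α → ℕ, Set.InjOn e s ∧ ∀ a, e a < n := by
  classical
  refine ⟨fun a ↦ if h : a ∈ s then s.equivFin ⟨a, h⟩ else 0, fun a ha b hb hab ↦ ?_, fun a ↦ ?_⟩
  · simp only [Finset.mem_coe] at ha hb
    simp only [dif_pos ha, dif_pos hb] at hab
    simpa using s.equivFin.injective (Fin.ext hab)
  · dsimp only
    split_ifs
    exacts [(Fin.is_lt _).trans_le hs, hn]

/-- Position of `a` in the `j`-th zigzag ordering `j, j + 1, j - 1, j + 2, j - 2, …, j + m`
of `ℤ/2m` (for `j < m` and `a < 2m`). -/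
def zigzagPos (m j a : ℕ) : ℕ :=
  if a < j then 2 * (j - a)
  else if a = j then 0
  else if a ≤ j + m then 2 * (a - j) - 1
  else 2 * (2 * m + j - a)

lemma zigzagPos_lt {m j a : ℕ} (hj : j < m) (ha : a < 2 * m) : zigzagPos m j a < 2 * m := by
  unfold zigzagPos
  split_ifs <;> omega

lemma zigzagPos_inj {m j a b : ℕ} (hj : j < m) (ha : a < 2 * m) (hb : b < 2 * m) :
    zigzagPos m j a = zigzagPos m j b ↔ a = b := by
  unfold zigzagPos
  split_ifs <;> omega

/-- Walecki: the zigzag path starting at `⌊(a + b) mod 2m / 2⌋` has `a` and `b` next to each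
other. -/
lemma exists_zigzagPos_succ {m a b : ℕ} (ha : a < 2 * m) (hb : b < 2 * m) (hab : a ≠ b) :
    ∃ j < m, zigzagPos m j a + 1 = zigzagPos m j b ∨ zigzagPos m j b + 1 = zigzagPos m j a := by
  refine ⟨if a + b < 2 * m then (a + b) / 2 else (a + b - 2 * m) / 2, by split_ifs <;> omega, ?_⟩
  unfold zigzagPos
  split_ifs <;> omega

section

variable {X : Type*} {du : X → X → ℝ}

namespace UltrametricOn

lemma symm (hu : UltrametricOn du) (x y : X) : du x y = du y x := hu.2.2.1 x y

lemma nonneg (hu : UltrametricOn du) (x y : X) : 0 ≤ du x y := by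
  rcases eq_or_ne x y with rfl | hxy
  · exact (hu.1 x).ge
  · exact (hu.2.1 x y hxy).le

lemma lt_of_lt_of_lt (hu : UltrametricOn du) {x y z : X} {r : ℝ} (hxy : du x y < r)
    (hyz : du y z < r) : du x z < r :=
  (hu.2.2.2 x y z).trans_lt (max_lt hxy hyz)

end UltrametricOn

lemma IsHST.le_div_of_lt {k : ℝ} (h : IsHST du k) (hu : UltrametricOn du) (hk : 0 < k)
    {x y z : X} (hlt : du x z < du x y) : du x z ≤ du x y / k := by
  rw [le_div_iff₀ hk, mul_comm]
  rcases (hu.nonneg x z).eq_or_lt with h0 | h0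
  · rw [← h0, mul_zero]
    exact hu.nonneg x y
  · exact h x z y h0 hlt

lemma HSTDegreeLE.mono {δ δ' : ℝ} (h : HSTDegreeLE du δ) (hδ : δ ≤ δ') : HSTDegreeLE du δ' :=
  fun x r hr ↦
    let ⟨S, hS, hcover⟩ := h x r hr
    ⟨S, hS.trans hδ, hcover⟩

noncomputable def classIn (du : X → X → ℝ) (A : Finset X) (r : ℝ) (x : X) : Finset X :=
  {z ∈ A | du x z < r}

@[simp]
lemma mem_classIn {A : Finset X} {r : ℝ} {x z : X} :
    z ∈ classIn du A r x ↔ z ∈ A ∧ du x z < r :=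
  Finset.mem_filter

lemma classIn_eq_of_lt (hu : UltrametricOn du) {A : Finset X} {r : ℝ} {x y : X}
    (hxy : du x y < r) : classIn du A r x = classIn du A r y := by
  ext z
  simp only [mem_classIn, and_congr_right_iff]
  exact fun _ ↦ ⟨hu.lt_of_lt_of_lt (by rwa [hu.symm]), hu.lt_of_lt_of_lt hxy⟩

lemma classIn_ssubset (hu : UltrametricOn du) {A : Finset X} {x₁ y₁ : X} (hx₁ : x₁ ∈ A)
    (hy₁ : y₁ ∈ A) (x : X) : classIn du A (du x₁ y₁) x ⊂ A := by
  refine Finset.filter_ssubset.2 ?_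
  by_contra! hall
  exact (hu.lt_of_lt_of_lt (by rw [hu.symm]; exact hall x₁ hx₁) (hall y₁ hy₁)).false

lemma card_image_classIn_le [DecidableEq X] (hu : UltrametricOn du) {δ : ℝ}
    (hdeg : HSTDegreeLE du δ) {A : Finset X} {r : ℝ} (hr : 0 < r) {x₀ : X} (hx₀ : ∀ y ∈ A, du x₀ y ≤ r) :
    ((A.image (classIn du A r)).card : ℝ) ≤ δ := by
  obtain ⟨S, hS, hcover⟩ := hdeg x₀ r hr
  refine le_trans (Nat.cast_le.2 ((Finset.card_le_card (t := S.image (classIn du A r)) ?_).trans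
    Finset.card_image_le)) hS
  intro B hB
  obtain ⟨y, hy, rfl⟩ := Finset.mem_image.1 hB
  obtain ⟨z, hz, hyz⟩ := hcover y (hx₀ y hy)
  exact Finset.mem_image.2 ⟨z, hz, (classIn_eq_of_lt hu hyz).symm⟩

/-- The strict, `du`-ultrametric form of `LSOPair` at stretch `1`, tested on points of `A`. -/
def StrictlyServes (A : Finset X) (du : X → X → ℝ) (σ : X → ℝ) (x y : X) : Prop :=
  σ x < σ y ∧ ∃ t : ℝ, ∀ z ∈ A, σ x < σ z → σ z < σ y →
    (σ z < t → du x z < du x y) ∧ (t ≤ σ z → du y z < du x y)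

namespace StrictlyServes

variable {A : Finset X} {σ : X → ℝ} {x y : X}

lemma congr (h : StrictlyServes A du σ x y) {σ' : X → ℝ} (hσ : Set.EqOn σ σ' A) (hx : x ∈ A)
    (hy : y ∈ A) : StrictlyServes A du σ' x y := by
  obtain ⟨hxy, t, ht⟩ := h
  refine ⟨by rwa [← hσ hx, ← hσ hy], t, fun z hz ↦ ?_⟩
  rw [← hσ hx, ← hσ hy, ← hσ hz]
  exact ht z hz

lemma comp_strictMono (h : StrictlyServes A du σ x y) {f : ℝ → ℝ} (hf : StrictMono f) :
    StrictlyServes A du (f ∘ σ) x y := by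
  obtain ⟨hxy, t, ht⟩ := h
  refine ⟨hf hxy, f t, fun z hz hxz hzy ↦ ?_⟩
  simp only [Function.comp_apply, hf.lt_iff_lt, hf.le_iff_le] at hxz hzy ⊢
  exact ht z hz hxz hzy

lemma lsoPair [Fintype X] [Dist X] {k ρ : ℝ} (h : StrictlyServes Finset.univ du σ x y)
    (hu : UltrametricOn du) (hhst : IsHST du k) (hk : 0 < k) (hdom : ∀ x y, dist x y ≤ du x y)
    (hxy : du x y ≤ ρ * dist x y) : LSOPair (fun a b ↦ dist a b) σ (ρ / k) x y := by
  obtain ⟨hlt, t, ht⟩ := h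
  have hbound : du x y / k ≤ ρ / k * dist x y := by
    rw [div_mul_eq_mul_div]
    gcongr
  refine ⟨hlt, t, fun z hxz hzy ↦ ?_⟩
  obtain ⟨hx, hy⟩ := ht z (Finset.mem_univ z) hxz hzy
  refine ⟨fun hz ↦ ?_, fun hz ↦ ?_⟩
  · calc dist x z ≤ du x z := hdom x z
      _ ≤ du x y / k := hhst.le_div_of_lt hu hk (hx hz)
      _ ≤ ρ / k * dist x y := hbound
  · calc dist y z ≤ du y z := hdom y z
      _ ≤ du y x / k := hhst.le_div_of_lt hu hk (by rw [hu.symm y x]; exact hy hz)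
      _ = du x y / k := by rw [hu.symm]
      _ ≤ ρ / k * dist x y := hbound

end StrictlyServes

/-- Lexicographic in `(κ, σ)` when `σ` takes values in `[0, 1)`. -/
def blockOrder (κ : X → ℕ) (σ : X → ℝ) (x : X) : ℝ := κ x + σ x

section blockOrder

variable {κ : X → ℕ} {σ : X → ℝ}

lemma blockOrder_lt_natCast_iff (hσ : ∀ z, σ z ∈ Set.Ico (0 : ℝ) 1) {x : X} {n : ℕ} :
    blockOrder κ σ x < n ↔ κ x < n := by
  obtain ⟨h0, h1⟩ := hσ x
  unfold blockOrder
  constructor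
  · intro h
    by_contra! hn
    have : (n : ℝ) ≤ κ x := by exact_mod_cast hn
    linarith
  · intro h
    have : (κ x : ℝ) + 1 ≤ n := by exact_mod_cast h
    linarith

lemma natCast_le_blockOrder_iff (hσ : ∀ z, σ z ∈ Set.Ico (0 : ℝ) 1) {x : X} {n : ℕ} :
    n ≤ blockOrder κ σ x ↔ n ≤ κ x := by
  simpa only [not_lt] using (blockOrder_lt_natCast_iff hσ).not

lemma blockOrder_lt_blockOrder_iff (hσ : ∀ z, σ z ∈ Set.Ico (0 : ℝ) 1) {x y : X} :
    blockOrder κ σ x < blockOrder κ σ y ↔ κ x < κ y ∨ κ x = κ y ∧ σ x < σ y := by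
  obtain ⟨hx0, hx1⟩ := hσ x
  obtain ⟨hy0, hy1⟩ := hσ y
  unfold blockOrder
  rcases lt_trichotomy (κ x) (κ y) with h | h | h
  · have : (κ x : ℝ) + 1 ≤ κ y := by exact_mod_cast h
    simp only [h, true_or, iff_true]
    linarith
  · simp [h]
  · have : (κ y : ℝ) + 1 ≤ κ x := by exact_mod_cast h
    simp only [h.not_gt, h.ne', false_and, or_false, iff_false, not_lt]
    linarith

lemma blockOrder_eq_blockOrder_iff (hσ : ∀ z, σ z ∈ Set.Ico (0 : ℝ) 1) {x y : X} :
    blockOrder κ σ x = blockOrder κ σ y ↔ κ x = κ y ∧ σ x = σ y := by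
  have hfloor : ∀ z, ⌊blockOrder κ σ z⌋₊ = κ z := fun z ↦
    (Nat.floor_eq_iff (by unfold blockOrder; linarith [(hσ z).1])).2
      ⟨by unfold blockOrder; linarith [(hσ z).1], by unfold blockOrder; linarith [(hσ z).2]⟩
  constructor
  · intro h
    have hκ : κ x = κ y := by rw [← hfloor x, h, hfloor y]
    refine ⟨hκ, ?_⟩
    unfold blockOrder at h
    rw [hκ] at h
    linarith
  · rintro ⟨hκ, hσxy⟩
    simp [blockOrder, hκ, hσxy]

lemma StrictlyServes.blockOrder {A B : Finset X} {x y : X} (h : StrictlyServes B du σ x y)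
    (hσ : ∀ z, σ z ∈ Set.Ico (0 : ℝ) 1) (hxy : κ x = κ y) (hB : ∀ z ∈ A, κ z = κ x → z ∈ B) :
    StrictlyServes A du (blockOrder κ σ) x y := by
  obtain ⟨hlt, t, ht⟩ := h
  refine ⟨(blockOrder_lt_blockOrder_iff hσ).2 (.inr ⟨hxy, hlt⟩), κ x + t, fun z hz h1 h2 ↦ ?_⟩
  rw [blockOrder_lt_blockOrder_iff hσ] at h1 h2
  have hzx : κ z = κ x ∧ σ x < σ z ∧ σ z < σ y := by
    rcases h1 with h1 | ⟨h1, h1'⟩ <;> rcases h2 with h2 | ⟨h2, h2'⟩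
    · omega
    · omega
    · omega
    · exact ⟨h1.symm, h1', h2'⟩
  obtain ⟨hzx, h1, h2⟩ := hzx
  have := ht z (hB z hz hzx) h1 h2
  unfold _root_.blockOrder
  rw [hzx]
  exact ⟨fun h ↦ this.1 (by linarith), fun h ↦ this.2 (by linarith)⟩

lemma strictlyServes_blockOrder_of_succ {A : Finset X} {x y : X}
    (hσ : ∀ z, σ z ∈ Set.Ico (0 : ℝ) 1) (hxy : κ x + 1 = κ y)
    (hx : ∀ z ∈ A, κ z = κ x → du x z < du x y) (hy : ∀ z ∈ A, κ z = κ y → du y z < du x y) :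
    StrictlyServes A du (blockOrder κ σ) x y := by
  refine ⟨(blockOrder_lt_blockOrder_iff hσ).2 (.inl (by omega)), κ y, fun z hz h1 h2 ↦ ?_⟩
  rw [blockOrder_lt_blockOrder_iff hσ] at h1 h2
  have hxz : κ x ≤ κ z := by rcases h1 with h | ⟨h, -⟩ <;> omega
  have hzy : κ z ≤ κ y := by rcases h2 with h | ⟨h, -⟩ <;> omega
  rw [blockOrder_lt_natCast_iff hσ, natCast_le_blockOrder_iff hσ]
  exact ⟨fun h ↦ hx z hz (by omega), fun h ↦ hy z hz (by omega)⟩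

end blockOrder

/-- Values in `[0, 1)` let families for disjoint sets be concatenated with `blockOrder`. -/
structure IsStrictLSOOn {m : ℕ} (du : X → X → ℝ) (A : Finset X) (σ : Fin m → X → ℝ) : Prop where
  mem_Ico : ∀ j x, σ j x ∈ Set.Ico (0 : ℝ) 1
  injOn : ∀ j, Set.InjOn (σ j) A
  serves : ∀ x ∈ A, ∀ y ∈ A, x ≠ y →
    ∃ j, StrictlyServes A du (σ j) x y ∨ StrictlyServes A du (σ j) y x

lemma isStrictLSOOn_zero_of_card_le_one {m : ℕ} {A : Finset X} (hA : A.card ≤ 1) :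
    IsStrictLSOOn (m := m) du A 0 where
  mem_Ico _ _ := by simp
  injOn _ x hx y hy _ := Finset.card_le_one.1 hA x hx y hy
  serves x hx y hy hxy := absurd (Finset.card_le_one.1 hA x hx y hy) hxy

noncomputable def concatOrder {m : ℕ} (C : X → Finset X) (e : Finset X → ℕ)
    (σ : Finset X → Fin m → X → ℝ) (j : Fin m) (x : X) : ℝ :=
  blockOrder (fun z ↦ zigzagPos m j (e (C z))) (fun z ↦ σ (C z) j z) x / (2 * m)

lemma concatOrder_mem_Ico {m : ℕ} {C : X → Finset X} {e : Finset X → ℕ}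
    {σ : Finset X → Fin m → X → ℝ} (he_lt : ∀ B, e B < 2 * m)
    (hσ : ∀ x j z, σ (C x) j z ∈ Set.Ico (0 : ℝ) 1) (j : Fin m) (x : X) :
    concatOrder C e σ j x ∈ Set.Ico (0 : ℝ) 1 := by
  have hm : (0 : ℝ) < 2 * m := by exact_mod_cast (Nat.zero_le _).trans_lt (he_lt ∅)
  have hκ : (zigzagPos m j (e (C x)) : ℝ) + 1 ≤ 2 * m := by
    exact_mod_cast zigzagPos_lt j.2 (he_lt (C x))
  obtain ⟨h0, h1⟩ := hσ x j x
  simp only [concatOrder, blockOrder, Set.mem_Ico, div_lt_one hm]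
  exact ⟨div_nonneg (by positivity) hm.le, by linarith⟩

lemma concatOrder_injOn [DecidableEq X] {m : ℕ} {A : Finset X} {C : X → Finset X}
    {e : Finset X → ℕ} {σ : Finset X → Fin m → X → ℝ}
    (hC : ∀ x ∈ A, ∀ z, z ∈ C x ↔ z ∈ A ∧ C z = C x) (he : Set.InjOn e (A.image C))
    (he_lt : ∀ B, e B < 2 * m) (hσ : ∀ x, IsStrictLSOOn du (C x) (σ (C x))) (j : Fin m) :
    Set.InjOn (concatOrder C e σ j) A := by
  have hm : (0 : ℝ) < 2 * m := by exact_mod_cast (Nat.zero_le _).trans_lt (he_lt ∅)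
  intro x hx y hy hxy
  obtain ⟨hκxy, hσxy⟩ := (blockOrder_eq_blockOrder_iff fun z ↦ (hσ z).mem_Ico j z).1
    ((div_left_inj' hm.ne').1 hxy)
  have hCxy : C x = C y := (he.eq_iff (Finset.mem_image_of_mem C hx)
    (Finset.mem_image_of_mem C hy)).1 ((zigzagPos_inj j.2 (he_lt _) (he_lt _)).1 hκxy)
  rw [hCxy] at hσxy
  exact (hσ y).injOn j ((hC y hy x).2 ⟨hx, hCxy⟩) ((hC y hy y).2 ⟨hy, rfl⟩) hσxy

theorem isStrictLSOOn_concatOrder [DecidableEq X] (hu : UltrametricOn du) {m : ℕ}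
    {A : Finset X} {C : X → Finset X} {e : Finset X → ℕ} {σ : Finset X → Fin m → X → ℝ}
    (hC : ∀ x ∈ A, ∀ z, z ∈ C x ↔ z ∈ A ∧ C z = C x) (he : Set.InjOn e (A.image C))
    (he_lt : ∀ B, e B < 2 * m) (hσ : ∀ x, IsStrictLSOOn du (C x) (σ (C x)))
    (hsep : ∀ x ∈ A, ∀ y ∈ A, C x ≠ C y → ∀ z ∈ C x, du x z < du x y) :
    IsStrictLSOOn du A (concatOrder C e σ) := by
  set κ : Fin m → X → ℕ := fun j z ↦ zigzagPos m j (e (C z))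
  set ι : Fin m → X → ℝ := fun j z ↦ σ (C z) j z
  have hι : ∀ j z, ι j z ∈ Set.Ico (0 : ℝ) 1 := fun j z ↦ (hσ z).mem_Ico j z
  have hm : (0 : ℝ) < 2 * m := by exact_mod_cast (Nat.zero_le _).trans_lt (he_lt ∅)
  have hκ : ∀ j, ∀ x ∈ A, ∀ z ∈ A, κ j z = κ j x ↔ C z = C x := fun j x hx z hz ↦
    (zigzagPos_inj j.2 (he_lt _) (he_lt _)).trans
      (he.eq_iff (Finset.mem_image_of_mem C hz) (Finset.mem_image_of_mem C hx))
  have hmem : ∀ x ∈ A, ∀ y ∈ A, C x = C y → y ∈ C x := fun x hx y hy h ↦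
    (hC x hx y).2 ⟨hy, h.symm⟩
  have hblock : ∀ j, ∀ x ∈ A, ∀ z ∈ A, κ j z = κ j x → z ∈ C x := fun j x hx z hz h ↦
    hmem x hx z hz ((hκ j x hx z hz).1 h).symm
  have hscale : ∀ j x y, StrictlyServes A du (blockOrder (κ j) (ι j)) x y →
      StrictlyServes A du (concatOrder C e σ j) x y := fun j x y h ↦
    h.comp_strictMono (strictMono_div_right_of_pos hm)
  have hsame : ∀ j, ∀ x ∈ A, ∀ y ∈ A, C x = C y → StrictlyServes (C x) du (σ (C x) j) x y →
      StrictlyServes A du (concatOrder C e σ j) x y := by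
    intro j x hx y hy hCxy h
    have hιC : Set.EqOn (σ (C x) j) (ι j) (C x) := fun z hz ↦ by
      simp only [ι, ((hC x hx z).1 hz).2]
    have h' := h.congr hιC (hmem x hx x hx rfl) (hmem x hx y hy hCxy)
    exact hscale j x y (h'.blockOrder (hι j) ((hκ j y hy x hx).2 hCxy) (hblock j x hx))
  have hcross : ∀ j, ∀ x ∈ A, ∀ y ∈ A, C x ≠ C y → κ j x + 1 = κ j y →
      StrictlyServes A du (concatOrder C e σ j) x y := by
    intro j x hx y hy hCxy hsucc
    refine hscale j x y (strictlyServes_blockOrder_of_succ (hι j) hsucc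
      (fun z hz h ↦ hsep x hx y hy hCxy z (hblock j x hx z hz h)) (fun z hz h ↦ ?_))
    rw [hu.symm x y]
    exact hsep y hy x hx (Ne.symm hCxy) z (hblock j y hy z hz h)
  refine ⟨concatOrder_mem_Ico he_lt fun x ↦ (hσ x).mem_Ico, concatOrder_injOn hC he he_lt hσ,
    fun x hx y hy hxy ↦ ?_⟩
  by_cases hCxy : C x = C y
  · obtain ⟨j, h | h⟩ := (hσ x).serves x (hmem x hx x hx rfl) y (hmem x hx y hy hCxy) hxy
    · exact ⟨j, .inl (hsame j x hx y hy hCxy h)⟩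
    · exact ⟨j, .inr (hsame j y hy x hx hCxy.symm (hCxy ▸ h))⟩
  · have hexy : e (C x) ≠ e (C y) := fun h ↦
      hCxy (he (Finset.mem_image_of_mem C hx) (Finset.mem_image_of_mem C hy) h)
    obtain ⟨j, hj, h | h⟩ := exists_zigzagPos_succ (he_lt (C x)) (he_lt (C y)) hexy
    · exact ⟨⟨j, hj⟩, .inl (hcross ⟨j, hj⟩ x hx y hy hCxy h)⟩
    · exact ⟨⟨j, hj⟩, .inr (hcross ⟨j, hj⟩ y hy x hx (Ne.symm hCxy) h)⟩

theorem exists_isStrictLSOOn_of_ssubset (hu : UltrametricOn du) {m : ℕ}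
    (hdeg : HSTDegreeLE du (2 * m)) {A : Finset X} {R : ℝ} (hR : 0 < R) {x₀ : X}
    (hx₀ : ∀ y ∈ A, du x₀ y ≤ R) (hA : ∀ x, classIn du A R x ⊂ A)
    (ih : ∀ B ⊂ A, ∃ σ : Fin m → X → ℝ, IsStrictLSOOn du B σ) :
    ∃ σ : Fin m → X → ℝ, IsStrictLSOOn du A σ := by
  classical
  set C := classIn du A R
  obtain ⟨a, ha, -⟩ := Finset.exists_of_ssubset (hA x₀)
  have hcard : (A.image C).card ≤ 2 * m := by
    exact_mod_cast card_image_classIn_le hu hdeg hR hx₀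
  obtain ⟨e, he, he_lt⟩ := Finset.exists_injOn_lt_of_card_le hcard
    ((Finset.card_pos.2 ⟨C a, Finset.mem_image_of_mem C ha⟩).trans_le hcard)
  choose! σ hσ using ih
  refine ⟨concatOrder C e σ, isStrictLSOOn_concatOrder hu (fun x hx z ↦ ?_) he he_lt
    (fun x ↦ hσ _ (hA x)) fun x hx y hy hxy z hz ↦ ?_⟩
  · simp only [C, mem_classIn]
    refine ⟨fun ⟨hz, hxz⟩ ↦ ⟨hz, (classIn_eq_of_lt hu hxz).symm⟩, fun ⟨hz, hzx⟩ ↦ ⟨hz, ?_⟩⟩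
    have hzC : z ∈ classIn du A R z := mem_classIn.2 ⟨hz, by rw [hu.1]; exact hR⟩
    rw [hzx] at hzC
    exact (mem_classIn.1 hzC).2
  · have hR_le : R ≤ du x y := not_lt.1 fun h ↦ hxy (classIn_eq_of_lt hu h)
    exact (mem_classIn.1 hz).2.trans_le hR_le

theorem exists_isStrictLSOOn (hu : UltrametricOn du) {m : ℕ} (hdeg : HSTDegreeLE du (2 * m))
    (A : Finset X) : ∃ σ : Fin m → X → ℝ, IsStrictLSOOn du A σ := by
  induction A using Finset.strongInduction with
  | H A ih =>
    rcases le_or_gt A.card 1 with hA | hA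
    · exact ⟨0, isStrictLSOOn_zero_of_card_le_one hA⟩
    obtain ⟨x, hx, y, hy, hxy⟩ := Finset.one_lt_card.1 hA
    have hxyA : (x, y) ∈ A ×ˢ A := Finset.mem_product.2 ⟨hx, hy⟩
    obtain ⟨⟨x₁, y₁⟩, hp, hmax⟩ := (A ×ˢ A).exists_max_image (fun p ↦ du p.1 p.2) ⟨_, hxyA⟩
    obtain ⟨hx₁, hy₁⟩ := Finset.mem_product.1 hp
    exact exists_isStrictLSOOn_of_ssubset hu hdeg ((hu.2.1 x y hxy).trans_le (hmax _ hxyA))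
      (fun z hz ↦ hmax (x₁, z) (Finset.mem_product.2 ⟨hx₁, hz⟩)) (classIn_ssubset hu hx₁ hy₁) ih

end

theorem hst_ultrametric_cover_to_LSO_general
    (X : Type) [MetricSpace X] [Fintype X] (τ ρ k δ : ℝ)
    (hk : 1 ≤ k)
    (hcover : IsHSTUltrametricCover X τ ρ k δ) :
    IsLSO (fun x y : X => dist x y) (τ * (⌈δ / 2⌉₊ : ℝ)) (ρ / k) := by
  obtain ⟨s, hs, D, hD, hdom, hcov, hhst, hdeg⟩ := hcover
  set m := ⌈δ / 2⌉₊
  have hδ : δ ≤ 2 * m := by linarith [Nat.le_ceil (δ / 2)]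
  choose σ hσ using fun i ↦ exists_isStrictLSOOn (hD i) ((hdeg i).mono hδ) Finset.univ
  have hk₀ : 0 < k := zero_lt_one.trans_le hk
  refine ⟨s * m, by push_cast; gcongr, fun p ↦ σ (finProdFinEquiv.symm p).1
    (finProdFinEquiv.symm p).2, fun p ↦ ?_, fun x y hxy ↦ ?_⟩
  · simpa using (hσ _).injOn _
  obtain ⟨i, hi⟩ := hcov x y
  have hi' : D i y x ≤ ρ * dist y x := by rwa [(hD i).symm, dist_comm]
  obtain ⟨j, h | h⟩ := (hσ i).serves x (Finset.mem_univ x) y (Finset.mem_univ y) hxy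
  · exact ⟨finProdFinEquiv (i, j), .inl (by simpa using h.lsoPair (hD i) (hhst i) hk₀ (hdom i) hi)⟩
  · exact ⟨finProdFinEquiv (i, j), .inr (by simpa using h.lsoPair (hD i) (hhst i) hk₀ (hdom i) hi')⟩

/-- If a finite metric space admits a `(τ,ρ,k,δ)`-ultrametric cover (with
`ρ,k,δ ≥ 1`), then it admits a `(τ·⌈δ/2⌉, ρ/k)`-LSO. -/
theorem hst_ultrametric_cover_to_LSO
    (X : Type) [MetricSpace X] [Fintype X] (τ ρ k δ : ℝ)
    (hρ : 1 ≤ ρ) (hk : 1 ≤ k) (hδ : 1 ≤ δ)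
    (hcover : IsHSTUltrametricCover X τ ρ k δ) :
    IsLSO (fun x y : X => dist x y) (τ * (⌈δ / 2⌉₊ : ℝ)) (ρ / k) :=
  hst_ultrametric_cover_to_LSO_general X τ ρ k δ hk hcover
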